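/- arXiv:2208.11217 — 7 statements merged into one kernel-verified Lean document; each statement's English description precedes it below -/
import Mathlib

section
/- Let a < b ≤ ∞ and let φ, σ, S : (a,b) → ℝ be functions with φ(x) > 0, φ′(x) < 0, σ(x) > 0 and S(x) > 0 for all x ∈ (a,b). Let I, J : (a,b) → ℝ be differentiable and satisfy J′(x) = −I′(x)·φ(x) for all x ∈ (a,b). Define L(x) := σ(x)²·φ′(x)²·I′(x)/(2·S(x)) and suppose L is differentiable with L′(x) > 0 for x ∈ (a,x*) and L′(x) < 0 for x ∈ (x*,b) for some x* ∈ (a,b), that L(x) → 0 as x → b from the left, and that L(x₀) < 0 for some x₀ ∈ (a,b). Then there exists a unique x̂ ∈ (a,x*) such that I′(x) < 0 and J′(x) > 0 for all x ∈ (a,x̂), and I′(x) > 0 and J′(x) < 0 for all x ∈ (x̂,b). If in addition there is z* ∈ (a,b) with I(x) < 0 for x ∈ (a,z*) and I(x) > 0 for x ∈ (z*,b), then x̂ < z*. -/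
/-!
The sign of `I'` is the sign of `L`, since `L = σ² φ'² I' / (2S)` with a positive factor, and the
sign of `J' = -I' φ` is the opposite one. `L` increases up to `x*` and then decreases towards its
limit `0` at `b`, so it is positive on `[x*, b)`; being negative at `x₀`, it crosses zero exactly
once, at some `x̂ < x*`, by the intermediate value theorem. Finally `I` decreases on `(a, x̂]`, so
it cannot change sign from negative to positive at a point `z* ≤ x̂`.
-/

open Set Filter Topology

section Derivative

variable {s : Set ℝ} [s.OrdConnected] {f f' : ℝ → ℝ} {c : ℝ}

lemma strictMonoOn_inter_Iic_of_hasDerivAt (hf : ∀ x ∈ s, HasDerivAt f (f' x) x)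
    (hf' : ∀ x ∈ s, x < c → 0 < f' x) : StrictMonoOn f (s ∩ Iic c) :=
  strictMonoOn_of_hasDerivWithinAt_pos (OrdConnected.inter ‹_› ordConnected_Iic).convex
    (fun x hx => (hf x hx.1).continuousAt.continuousWithinAt)
    (fun x hx => (hf x (interior_subset hx).1).hasDerivWithinAt) fun x hx => by
      rw [interior_inter, interior_Iic] at hx
      exact hf' x (interior_subset hx.1) hx.2

lemma strictAntiOn_inter_Iic_of_hasDerivAt (hf : ∀ x ∈ s, HasDerivAt f (f' x) x)
    (hf' : ∀ x ∈ s, x < c → f' x < 0) : StrictAntiOn f (s ∩ Iic c) :=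
  strictAntiOn_of_hasDerivWithinAt_neg (OrdConnected.inter ‹_› ordConnected_Iic).convex
    (fun x hx => (hf x hx.1).continuousAt.continuousWithinAt)
    (fun x hx => (hf x (interior_subset hx).1).hasDerivWithinAt) fun x hx => by
      rw [interior_inter, interior_Iic] at hx
      exact hf' x (interior_subset hx.1) hx.2

lemma strictAntiOn_inter_Ici_of_hasDerivAt (hf : ∀ x ∈ s, HasDerivAt f (f' x) x)
    (hf' : ∀ x ∈ s, c < x → f' x < 0) : StrictAntiOn f (s ∩ Ici c) :=
  strictAntiOn_of_hasDerivWithinAt_neg (OrdConnected.inter ‹_› ordConnected_Ici).convex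
    (fun x hx => (hf x hx.1).continuousAt.continuousWithinAt)
    (fun x hx => (hf x (interior_subset hx).1).hasDerivWithinAt) fun x hx => by
      rw [interior_inter, interior_Ici] at hx
      exact hf' x (interior_subset hx.1) hx.2

end Derivative

lemma StrictAntiOn.lt_of_tendsto {α β : Type*} [Preorder α] [Preorder β] [TopologicalSpace β]
    [OrderClosedTopology β] {f : α → β} {s : Set α} {l : Filter α} [l.NeBot] {m : β}
    (hf : StrictAntiOn f s) (hl : Tendsto f l (𝓝 m)) (hs : ∀ y ∈ s, ∀ᶠ x in l, x ∈ s ∧ y < x)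
    {y : α} (hy : y ∈ s) : m < f y := by
  obtain ⟨z, hz, hyz⟩ := (hs y hy).exists
  have hmz : m ≤ f z :=
    le_of_tendsto hl ((hs z hz).mono fun x hx => (hf hz hx.1 hx.2).le)
  exact hmz.trans_lt (hf hy hz hyz)

lemma le_of_forall_neg_of_forall_pos {α β : Type*} [LinearOrder α] [DenselyOrdered α]
    [Preorder β] [Zero β] {g : α → β} {s : Set α} [s.OrdConnected] {y z : α} (hy : y ∈ s)
    (hz : z ∈ s)
    (hneg : ∀ x ∈ s, x < y → g x < 0) (hpos : ∀ x ∈ s, z < x → 0 < g x) : y ≤ z := by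
  by_contra! hzy
  obtain ⟨w, hzw, hwy⟩ := exists_between hzy
  have hw : w ∈ s := Set.Icc_subset s hz hy ⟨hzw.le, hwy.le⟩
  exact lt_irrefl _ ((hpos w hw hzw).trans (hneg w hw hwy))

lemma exists_zero_crossing_of_strictMonoOn {f : ℝ → ℝ} {s : Set ℝ} [s.OrdConnected]
    {c x₀ : ℝ} (hc : c ∈ s) (hf : ContinuousOn f s) (hmono : StrictMonoOn f (s ∩ Iic c))
    (hpos : ∀ x ∈ s, c ≤ x → 0 < f x) (hx₀ : x₀ ∈ s) (hfx₀ : f x₀ < 0) :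
    ∃ xhat ∈ s, xhat < c ∧ (∀ x ∈ s, x < xhat → f x < 0) ∧ ∀ x ∈ s, xhat < x → 0 < f x := by
  have hx₀c : x₀ < c := not_le.1 fun h => (hpos x₀ hx₀ h).not_gt hfx₀
  have hIcc : Icc x₀ c ⊆ s := Set.Icc_subset s hx₀ hc
  obtain ⟨xhat, hxhat, hfxhat⟩ :=
    intermediate_value_Ioo hx₀c.le (hf.mono hIcc) ⟨hfx₀, hpos c hc le_rfl⟩
  have hxhat_s : xhat ∈ s := hIcc (Ioo_subset_Icc_self hxhat)
  refine ⟨xhat, hxhat_s, hxhat.2, fun x hx hxlt => ?_, fun x hx hltx => ?_⟩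
  · rw [← hfxhat]
    exact hmono ⟨hx, (hxlt.trans hxhat.2).le⟩ ⟨hxhat_s, hxhat.2.le⟩ hxlt
  · rcases le_or_gt c x with hcx | hxc
    · exact hpos x hx hcx
    · rw [← hfxhat]
      exact hmono ⟨hxhat_s, hxhat.2.le⟩ ⟨hx, hxc.le⟩ hltx

lemma lt_of_strictAntiOn_of_neg_of_pos {g : ℝ → ℝ} {s : Set ℝ} {c z u : ℝ}
    (hg : StrictAntiOn g (s ∩ Iic c)) (hgz : ContinuousWithinAt g (Ioi z) z)
    (hpos : ∀ᶠ x in 𝓝[>] z, 0 < g x) (hz : z ∈ s) (hu : u ∈ s) (huz : u < z) (hgu : g u < 0) :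
    c < z := by
  by_contra! hzc
  have hgz_nonneg : 0 ≤ g z := ge_of_tendsto hgz (hpos.mono fun _ => le_of_lt)
  have hgzu : g z < g u := hg ⟨hu, huz.le.trans hzc⟩ ⟨hz, hzc⟩ huz
  linarith

namespace EReal

lemma eventually_comap_coe_nhdsLT {b : EReal} {y : ℝ} (hy : (y : EReal) < b) :
    ∀ᶠ x : ℝ in comap (↑) (𝓝[<] b), y < x ∧ (x : EReal) < b := by
  have hmem : Ioo (y : EReal) b ∈ 𝓝[<] b :=
    (mem_nhdsLT_iff_exists_Ioo_subset' hy).2 ⟨y, hy, subset_rfl⟩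
  exact (tendsto_comap.eventually hmem).mono fun x hx => ⟨EReal.coe_lt_coe_iff.1 hx.1, hx.2⟩

lemma comap_coe_nhdsLT_neBot {b : EReal} {y : ℝ} (hy : (y : EReal) < b) :
    (comap ((↑) : ℝ → EReal) (𝓝[<] b)).NeBot := by
  refine comap_neBot fun t ht => ?_
  obtain ⟨l, hl, hsub⟩ := (mem_nhdsLT_iff_exists_Ioo_subset' hy).1 ht
  obtain ⟨r, hlr, hrb⟩ := EReal.lt_iff_exists_real_btwn.1 hl
  exact ⟨r, hsub ⟨hlr, hrb⟩⟩

end EReal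

def realIoo (a : ℝ) (b : EReal) : Set ℝ := {x | a < x ∧ (x : EReal) < b}

section realIoo

variable {a : ℝ} {b : EReal}

instance : (realIoo a b).OrdConnected :=
  ⟨fun _ hx _ hy _ hz => ⟨hx.1.trans_le hz.1, (EReal.coe_le_coe_iff.2 hz.2).trans_lt hy.2⟩⟩

lemma isOpen_realIoo : IsOpen (realIoo a b) :=
  isOpen_Ioi.inter (isOpen_lt continuous_coe_real_ereal continuous_const)

lemma mem_realIoo_of_le {x y : ℝ} (hax : a < x) (hy : y ∈ realIoo a b) (hxy : x ≤ y) :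
    x ∈ realIoo a b :=
  ⟨hax, (EReal.coe_le_coe_iff.2 hxy).trans_lt hy.2⟩

lemma mem_realIoo_of_ge {x y : ℝ} (hy : y ∈ realIoo a b) (hyx : y ≤ x) (hxb : (x : EReal) < b) :
    x ∈ realIoo a b :=
  ⟨hy.1.trans_le hyx, hxb⟩

theorem exists_zero_crossing_of_unimodal {L L' : ℝ → ℝ} {c x₀ : ℝ} (hc : c ∈ realIoo a b)
    (hL : ∀ x ∈ realIoo a b, HasDerivAt L (L' x) x)
    (hL'pos : ∀ x ∈ realIoo a b, x < c → 0 < L' x) (hL'neg : ∀ x ∈ realIoo a b, c < x → L' x < 0)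
    (hlim : Tendsto L (comap (↑) (𝓝[<] b)) (𝓝 0)) (hx₀ : x₀ ∈ realIoo a b) (hLx₀ : L x₀ < 0) :
    ∃ xhat ∈ realIoo a b, xhat < c ∧ (∀ x ∈ realIoo a b, x < xhat → L x < 0) ∧
      ∀ x ∈ realIoo a b, xhat < x → 0 < L x := by
  have hmono := strictMonoOn_inter_Iic_of_hasDerivAt hL hL'pos
  have hanti := strictAntiOn_inter_Ici_of_hasDerivAt hL hL'neg
  have := EReal.comap_coe_nhdsLT_neBot hc.2
  have hpos : ∀ x ∈ realIoo a b, c ≤ x → 0 < L x := fun x hx hcx =>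
    hanti.lt_of_tendsto hlim (fun y hy => (EReal.eventually_comap_coe_nhdsLT hy.1.2).mono
      fun z hz => ⟨⟨mem_realIoo_of_ge hy.1 hz.1.le hz.2, hy.2.trans hz.1.le⟩, hz.1⟩) ⟨hx, hcx⟩
  exact exists_zero_crossing_of_strictMonoOn hc
    (fun x hx => (hL x hx).continuousAt.continuousWithinAt) hmono hpos hx₀ hLx₀

lemma lt_of_neg_of_pos_of_hasDerivAt {I I' : ℝ → ℝ} {xhat z : ℝ}
    (hI : ∀ x ∈ realIoo a b, HasDerivAt I (I' x) x)
    (hI' : ∀ x ∈ realIoo a b, x < xhat → I' x < 0) (hz : z ∈ realIoo a b)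
    (hneg : ∀ x, a < x → x < z → I x < 0) (hpos : ∀ x, z < x → (x : EReal) < b → 0 < I x) :
    xhat < z := by
  have hanti := strictAntiOn_inter_Iic_of_hasDerivAt hI hI'
  have hpos_near : ∀ᶠ x in 𝓝[>] z, 0 < I x := by
    filter_upwards [self_mem_nhdsWithin, mem_nhdsWithin_of_mem_nhds (isOpen_realIoo.mem_nhds hz)]
      with x hzx hx using hpos x hzx hx.2
  obtain ⟨u, hau, huz⟩ := exists_between hz.1
  exact lt_of_strictAntiOn_of_neg_of_pos hanti (hI z hz).continuousAt.continuousWithinAt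
    hpos_near hz (mem_realIoo_of_le hau hz huz.le) huz (hneg u hau huz)

end realIoo

lemma neg_and_pos_of_mul_neg {c u p : ℝ} (hc : 0 < c) (hp : 0 < p) (h : c * u < 0) :
    u < 0 ∧ 0 < -u * p :=
  have hu : u < 0 := neg_of_mul_neg_right h hc.le
  ⟨hu, mul_pos (neg_pos.2 hu) hp⟩

lemma pos_and_neg_of_mul_pos {c u p : ℝ} (hc : 0 < c) (hp : 0 < p) (h : 0 < c * u) :
    0 < u ∧ -u * p < 0 :=
  have hu : 0 < u := (mul_pos_iff_of_pos_left hc).1 h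
  ⟨hu, mul_neg_of_neg_of_pos (neg_neg_of_pos hu) hp⟩

theorem stmt0_general
    (a : ℝ) (b : EReal)
    (φ φ' σ S I I' J' L L' : ℝ → ℝ)
    (xstar : ℝ) (hxstar : a < xstar ∧ (xstar : EReal) < b)
    (hφpos : ∀ x, a < x → (x : EReal) < b → 0 < φ x)
    (hφ'neg : ∀ x, a < x → (x : EReal) < b → φ' x < 0)
    (hσpos : ∀ x, a < x → (x : EReal) < b → 0 < σ x)
    (hSpos : ∀ x, a < x → (x : EReal) < b → 0 < S x)
    (hI : ∀ x, a < x → (x : EReal) < b → HasDerivAt I (I' x) x)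
    (hJI : ∀ x, a < x → (x : EReal) < b → J' x = -(I' x) * φ x)
    (hL : ∀ x, a < x → (x : EReal) < b →
      L x = σ x ^ 2 * (φ' x) ^ 2 * I' x / (2 * S x))
    (hLd : ∀ x, a < x → (x : EReal) < b → HasDerivAt L (L' x) x)
    (hL'pos : ∀ x, a < x → x < xstar → 0 < L' x)
    (hL'neg : ∀ x, xstar < x → (x : EReal) < b → L' x < 0)
    (hLlim : Tendsto L (comap (fun x : ℝ => (x : EReal)) (𝓝[<] b)) (𝓝 0))
    (hLneg : ∃ x₀, a < x₀ ∧ (x₀ : EReal) < b ∧ L x₀ < 0) :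
    ∃ xhat, (a < xhat ∧ xhat < xstar) ∧
      (∀ x, a < x → x < xhat → I' x < 0 ∧ 0 < J' x) ∧
      (∀ x, xhat < x → (x : EReal) < b → 0 < I' x ∧ J' x < 0) ∧
      (∀ y, (a < y ∧ y < xstar) →
        (∀ x, a < x → x < y → I' x < 0 ∧ 0 < J' x) →
        (∀ x, y < x → (x : EReal) < b → 0 < I' x ∧ J' x < 0) → y = xhat) ∧
      (∀ zstar, a < zstar → (zstar : EReal) < b →
        (∀ x, a < x → x < zstar → I x < 0) →
        (∀ x, zstar < x → (x : EReal) < b → 0 < I x) → xhat < zstar) := by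
  have hxstar' : xstar ∈ realIoo a b := hxstar
  obtain ⟨x₀, hx₀a, hx₀b, hLx₀⟩ := hLneg
  obtain ⟨xhat, hxhat, hxhat_lt, hLleft, hLright⟩ := exists_zero_crossing_of_unimodal hxstar'
    (fun x hx => hLd x hx.1 hx.2) (fun x hx => hL'pos x hx.1) (fun x hx h => hL'neg x h hx.2)
    hLlim ⟨hx₀a, hx₀b⟩ hLx₀
  have hLI : ∀ x ∈ realIoo a b, 0 < σ x ^ 2 * φ' x ^ 2 / (2 * S x) ∧
      L x = σ x ^ 2 * φ' x ^ 2 / (2 * S x) * I' x := fun x hx => by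
    have := hσpos x hx.1 hx.2
    have := (hφ'neg x hx.1 hx.2).ne
    have := hSpos x hx.1 hx.2
    exact ⟨by positivity, by rw [hL x hx.1 hx.2]; ring⟩
  have hleft : ∀ x ∈ realIoo a b, x < xhat → I' x < 0 ∧ 0 < J' x := fun x hx h => by
    rw [hJI x hx.1 hx.2]
    exact neg_and_pos_of_mul_neg (hLI x hx).1 (hφpos x hx.1 hx.2) ((hLI x hx).2 ▸ hLleft x hx h)
  have hright : ∀ x ∈ realIoo a b, xhat < x → 0 < I' x ∧ J' x < 0 := fun x hx h => by
    rw [hJI x hx.1 hx.2]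
    exact pos_and_neg_of_mul_pos (hLI x hx).1 (hφpos x hx.1 hx.2) ((hLI x hx).2 ▸ hLright x hx h)
  refine ⟨xhat, ⟨hxhat.1, hxhat_lt⟩, fun x hax h => hleft x (mem_realIoo_of_le hax hxhat h.le) h,
    fun x h hxb => hright x (mem_realIoo_of_ge hxhat h.le hxb) h, fun y hy hyl hyr => ?_,
    fun z hza hzb hIneg hIpos => ?_⟩
  · have hy' : y ∈ realIoo a b := mem_realIoo_of_le hy.1 hxstar' hy.2.le
    exact le_antisymm
      (le_of_forall_neg_of_forall_pos hy' hxhat (fun x hx h => (hyl x hx.1 h).1)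
        fun x hx h => (hright x hx h).1)
      (le_of_forall_neg_of_forall_pos hxhat hy' (fun x hx h => (hleft x hx h).1)
        fun x hx h => (hyr x h hx.2).1)
  · exact lt_of_neg_of_pos_of_hasDerivAt (fun x hx => hI x hx.1 hx.2)
      (fun x hx h => (hleft x hx h).1) ⟨hza, hzb⟩ hIneg hIpos

/-- Lemma 4 of the paper: shape of the auxiliary functions `I` and `J`. -/
theorem stmt0
    (a : ℝ) (b : EReal) (hab : (a : EReal) < b)
    (φ φ' σ S I I' J J' L L' : ℝ → ℝ)
    (xstar : ℝ) (hxstar : a < xstar ∧ (xstar : EReal) < b)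
    (hφpos : ∀ x, a < x → (x : EReal) < b → 0 < φ x)
    (hφd : ∀ x, a < x → (x : EReal) < b → HasDerivAt φ (φ' x) x)
    (hφ'neg : ∀ x, a < x → (x : EReal) < b → φ' x < 0)
    (hσpos : ∀ x, a < x → (x : EReal) < b → 0 < σ x)
    (hSpos : ∀ x, a < x → (x : EReal) < b → 0 < S x)
    (hI : ∀ x, a < x → (x : EReal) < b → HasDerivAt I (I' x) x)
    (hJ : ∀ x, a < x → (x : EReal) < b → HasDerivAt J (J' x) x)
    (hJI : ∀ x, a < x → (x : EReal) < b → J' x = -(I' x) * φ x)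
    (hL : ∀ x, a < x → (x : EReal) < b →
      L x = σ x ^ 2 * (φ' x) ^ 2 * I' x / (2 * S x))
    (hLd : ∀ x, a < x → (x : EReal) < b → HasDerivAt L (L' x) x)
    (hL'pos : ∀ x, a < x → x < xstar → 0 < L' x)
    (hL'neg : ∀ x, xstar < x → (x : EReal) < b → L' x < 0)
    (hLlim : Tendsto L (comap (fun x : ℝ => (x : EReal)) (𝓝[<] b)) (𝓝 0))
    (hLneg : ∃ x₀, a < x₀ ∧ (x₀ : EReal) < b ∧ L x₀ < 0) :
    ∃ xhat, (a < xhat ∧ xhat < xstar) ∧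
      (∀ x, a < x → x < xhat → I' x < 0 ∧ 0 < J' x) ∧
      (∀ x, xhat < x → (x : EReal) < b → 0 < I' x ∧ J' x < 0) ∧
      (∀ y, (a < y ∧ y < xstar) →
        (∀ x, a < x → x < y → I' x < 0 ∧ 0 < J' x) →
        (∀ x, y < x → (x : EReal) < b → 0 < I' x ∧ J' x < 0) → y = xhat) ∧
      (∀ zstar, a < zstar → (zstar : EReal) < b →
        (∀ x, a < x → x < zstar → I x < 0) →
        (∀ x, zstar < x → (x : EReal) < b → 0 < I x) → xhat < zstar) :=
  stmt0_general a b φ φ' σ S I I' J' L L' xstar hxstar hφpos hφ'neg hσpos hSpos hI hJI hL hLd hL'pos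
    hL'neg hLlim hLneg
end

section
/- Fix constants μ < 0, σ > 0, r > 0, α ∈ (0,1), k > 0. Let γ₋ := 1/2 − μ/σ² − √((1/2 − μ/σ²)² + 2r/σ²) (so γ₋ < 0), δ(α) := αμ + σ²α(α−1)/2, and D := r − δ(α) (so D > 0). On (0,∞) define I(x) := (1/γ₋)(α x^{α−γ₋}/D − k x^{1−γ₋}), J(x) := (1 − α/γ₋) x^α/D − k x (1 − 1/γ₋), z* := (α/(kD))^{1/(1−α)}, and x̂ := (α(α−γ₋)/(kD(1−γ₋)))^{1/(1−α)}. Then for every c₂ ∈ (0, (1−α)·(z*)^α/D) there exist θ* ∈ (0,x̂) and z₂ ∈ (x̂,z*) such that I(θ*) = I(z₂) and J(z₂) − J(θ*) = c₂. -/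
/-!
`I` decreases on `(0, x̂]` and increases on `[x̂, z*]`, and `I(0+) = I(z*) = 0`. Pairing each
`θ ≤ x̂` with the point `z(θ) ≥ x̂` at the same height gives a continuous gap
`θ ↦ J(z(θ)) - J(θ)`, which vanishes at `θ = x̂` and tends to `J(z*) - J(0+) = (1-α)(z*)^α/D`
as `θ → 0`; by the intermediate value theorem it takes every value in between.
-/

open Set

theorem StrictMonoOn.exists_continuous_inverse_Icc {α β : Type*}
    [ConditionallyCompleteLinearOrder α] [TopologicalSpace α] [OrderTopology α] [DenselyOrdered α]
    [LinearOrder β] [TopologicalSpace β] [OrderTopology β]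
    {f : α → β} {a b : α} (hab : a ≤ b) (hf : ContinuousOn f (Icc a b))
    (hmono : StrictMonoOn f (Icc a b)) :
    ∃ g : β → α, Continuous g ∧ (∀ y, g y ∈ Icc a b) ∧
      (∀ y ∈ Icc (f a) (f b), f (g y) = y) ∧ ∀ x ∈ Icc a b, g (f x) = x := by
  have hfab : f a ≤ f b := hmono.monotoneOn (left_mem_Icc.2 hab) (right_mem_Icc.2 hab) hab
  let φ : Icc a b → Icc (f a) (f b) := fun x =>
    ⟨f x, hmono.monotoneOn (left_mem_Icc.2 hab) x.2 x.2.1,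
      hmono.monotoneOn x.2 (right_mem_Icc.2 hab) x.2.2⟩
  have hφ : StrictMono φ := fun x y hxy => hmono x.2 y.2 hxy
  have hsurj : Function.Surjective φ := by
    rintro ⟨y, hy⟩
    obtain ⟨x, hx, rfl⟩ := intermediate_value_Icc hab hf hy
    exact ⟨⟨x, hx⟩, rfl⟩
  let e := StrictMono.orderIsoOfSurjective φ hφ hsurj
  refine ⟨fun y => e.symm (projIcc (f a) (f b) hfab y),
    continuous_subtype_val.comp (e.symm.continuous.comp continuous_projIcc),
    fun y => (e.symm _).2, fun y hy => ?_, fun x hx => ?_⟩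
  · change ((e (e.symm (projIcc (f a) (f b) hfab y)) : β)) = y
    rw [OrderIso.apply_symm_apply, projIcc_of_mem hfab hy]
  · change ((e.symm (projIcc (f a) (f b) hfab (φ ⟨x, hx⟩)) : α)) = x
    rw [projIcc_of_mem hfab (φ ⟨x, hx⟩).2]
    exact congrArg Subtype.val (e.symm_apply_apply ⟨x, hx⟩)

theorem exists_eq_and_sub_eq_of_strictAntiOn_of_strictMonoOn {α β : Type*}
    [ConditionallyCompleteLinearOrder α] [TopologicalSpace α] [OrderTopology α] [DenselyOrdered α]
    [LinearOrder β] [TopologicalSpace β] [OrderTopology β]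
    {f : α → β} {g : α → ℝ} {a m z : α} {c : ℝ} (hax : a < m) (hmz : m < z)
    (hf : ContinuousOn f (Icc a z)) (hg : ContinuousOn g (Icc a z))
    (hanti : StrictAntiOn f (Icc a m)) (hmono : StrictMonoOn f (Icc m z)) (hfaz : f a = f z)
    (hc0 : 0 < c) (hc : c < g z - g a) :
    ∃ θ z₂, θ ∈ Ioo a m ∧ z₂ ∈ Ioo m z ∧ f θ = f z₂ ∧ g z₂ - g θ = c := by
  obtain ⟨h, hh, hh_mem, hfh, hhf⟩ :=
    hmono.exists_continuous_inverse_Icc hmz.le (hf.mono (Icc_subset_Icc_left hax.le))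
  have hm_mem : m ∈ Icc a m := right_mem_Icc.2 hax.le
  have hh_mem' : ∀ y, h y ∈ Icc a z := fun y => Icc_subset_Icc_left hax.le (hh_mem y)
  let F : α → ℝ := fun θ => g (h (f θ)) - g θ
  have hF : ContinuousOn F (Icc a m) :=
    ((hg.comp hh.continuousOn fun y _ => hh_mem' y).comp
      (hf.mono (Icc_subset_Icc_right hmz.le)) (mapsTo_univ _ _)).sub
      (hg.mono (Icc_subset_Icc_right hmz.le))
  have hFm : F m = 0 := by simp [F, hhf m (left_mem_Icc.2 hmz.le)]
  have hFa : F a = g z - g a := by simp [F, hfaz, hhf z (right_mem_Icc.2 hmz.le)]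
  obtain ⟨θ, hθ, hFθ⟩ := intermediate_value_Icc' hax.le hF ⟨hFm ▸ hc0.le, hFa ▸ hc.le⟩
  have hθa : a < θ := lt_of_le_of_ne hθ.1 (by rintro rfl; linarith)
  have hθm : θ < m := lt_of_le_of_ne hθ.2 (by rintro rfl; linarith)
  have hfθ_lo : f m < f θ := hanti hθ hm_mem hθm
  have hfθ_hi : f θ < f z := hfaz ▸ hanti (left_mem_Icc.2 hax.le) hθ hθa
  have hfhθ : f (h (f θ)) = f θ := hfh _ ⟨hfθ_lo.le, hfθ_hi.le⟩
  refine ⟨θ, h (f θ), ⟨hθa, hθm⟩, ⟨?_, ?_⟩, hfhθ.symm, hFθ⟩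
  · exact (hmono.lt_iff_lt (left_mem_Icc.2 hmz.le) (hh_mem _)).1 (by rwa [hfhθ])
  · exact (hmono.lt_iff_lt (hh_mem _) (right_mem_Icc.2 hmz.le)).1 (by rwa [hfhθ])

theorem sub_sqrt_sq_add_neg (q : ℝ) {s : ℝ} (hs : 0 < s) : q - √(q ^ 2 + s) < 0 := by
  have : √(q ^ 2) < √(q ^ 2 + s) := Real.sqrt_lt_sqrt (sq_nonneg q) (by linarith)
  rw [Real.sqrt_sq_eq_abs] at this
  linarith [le_abs_self q]

theorem rpow_one_div_one_sub_rpow_sub_one {c α : ℝ} (hc : 0 ≤ c) (hα : α ≠ 1) :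
    (c ^ (1 / (1 - α))) ^ (α - 1) = c⁻¹ := by
  rw [← Real.rpow_mul hc, show 1 / (1 - α) * (α - 1) = -1 by
    field_simp [sub_ne_zero.2 hα.symm]; ring, Real.rpow_neg_one]

section GBM

variable {α γ D k : ℝ}

/- The formulas for `I` and `J`, taken on all of `ℝ`: with positive exponents they are continuous
and vanish at `0`, so the endpoint `0` can serve as the left end of the valley. -/
noncomputable def gbmI (α γ D k x : ℝ) : ℝ := (1 / γ) * (α * x ^ (α - γ) / D - k * x ^ (1 - γ))

noncomputable def gbmJ (α γ D k x : ℝ) : ℝ := (1 - α / γ) * x ^ α / D - k * x * (1 - 1 / γ)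

theorem continuous_gbmI (hγα : γ ≤ α) (hγ1 : γ ≤ 1) : Continuous (gbmI α γ D k) := by
  have := Real.continuous_rpow_const (sub_nonneg.2 hγα)
  have := Real.continuous_rpow_const (sub_nonneg.2 hγ1)
  unfold gbmI
  fun_prop

theorem continuous_gbmJ (hα : 0 ≤ α) : Continuous (gbmJ α γ D k) := by
  have := Real.continuous_rpow_const hα
  unfold gbmJ
  fun_prop

theorem gbmI_zero (hγα : γ < α) (hγ1 : γ < 1) : gbmI α γ D k 0 = 0 := by
  simp [gbmI, Real.zero_rpow (sub_ne_zero.2 hγα.ne'), Real.zero_rpow (sub_ne_zero.2 hγ1.ne')]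

theorem gbmJ_zero (hα : α ≠ 0) : gbmJ α γ D k 0 = 0 := by
  simp [gbmJ, Real.zero_rpow hα]

theorem hasDerivAt_gbmI {m x : ℝ} (hα : α ≠ 0) (hγ : γ ≠ 0) (hγα : γ ≠ α) (hD : D ≠ 0)
    (hm : m ^ (α - 1) = k * D * (1 - γ) / (α * (α - γ))) (hx : 0 < x) :
    HasDerivAt (gbmI α γ D k)
      (α * (α - γ) / (γ * D) * x ^ (-γ) * (x ^ (α - 1) - m ^ (α - 1))) x := by
  have h₁ := Real.hasDerivAt_rpow_const (p := α - γ) (Or.inl hx.ne')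
  have h₂ := Real.hasDerivAt_rpow_const (p := 1 - γ) (Or.inl hx.ne')
  refine ((((h₁.const_mul α).div_const D).sub (h₂.const_mul k)).const_mul (1 / γ)).congr_deriv ?_
  rw [hm, show α - γ - 1 = (α - 1) + -γ by ring, show 1 - γ - 1 = -γ by ring, Real.rpow_add hx]
  have : α - γ ≠ 0 := sub_ne_zero.2 hγα.symm
  field_simp

theorem strictAntiOn_gbmI {m : ℝ} (hα : 0 < α) (hα1 : α < 1) (hγ : γ < 0) (hD : 0 < D)
    (hm : m ^ (α - 1) = k * D * (1 - γ) / (α * (α - γ))) :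
    StrictAntiOn (gbmI α γ D k) (Icc 0 m) := by
  refine strictAntiOn_of_deriv_neg (convex_Icc 0 m)
    (continuous_gbmI (by linarith) (by linarith)).continuousOn fun x hx => ?_
  rw [interior_Icc] at hx
  rw [(hasDerivAt_gbmI hα.ne' hγ.ne (by linarith) hD.ne' hm hx.1).deriv]
  have hC : α * (α - γ) / (γ * D) < 0 :=
    div_neg_of_pos_of_neg (mul_pos hα (by linarith)) (mul_neg_of_neg_of_pos hγ hD)
  exact mul_neg_of_neg_of_pos (mul_neg_of_neg_of_pos hC (Real.rpow_pos_of_pos hx.1 _))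
    (sub_pos.2 (Real.rpow_lt_rpow_of_neg hx.1 hx.2 (by linarith)))

theorem strictMonoOn_gbmI {m : ℝ} (hm0 : 0 < m) (hα : 0 < α) (hα1 : α < 1) (hγ : γ < 0)
    (hD : 0 < D) (hm : m ^ (α - 1) = k * D * (1 - γ) / (α * (α - γ))) :
    StrictMonoOn (gbmI α γ D k) (Ici m) := by
  refine strictMonoOn_of_deriv_pos (convex_Ici m)
    (continuous_gbmI (by linarith) (by linarith)).continuousOn fun x hx => ?_
  rw [interior_Ici] at hx
  rw [(hasDerivAt_gbmI hα.ne' hγ.ne (by linarith) hD.ne' hm (hm0.trans hx)).deriv]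
  have hC : α * (α - γ) / (γ * D) < 0 :=
    div_neg_of_pos_of_neg (mul_pos hα (by linarith)) (mul_neg_of_neg_of_pos hγ hD)
  exact mul_pos_of_neg_of_neg (mul_neg_of_neg_of_pos hC (Real.rpow_pos_of_pos (hm0.trans hx) _))
    (sub_neg.2 (Real.rpow_lt_rpow_of_neg hm0 hx (by linarith)))

theorem mul_eq_of_rpow_sub_one_eq {z : ℝ} (hz : 0 < z) (hα : α ≠ 0) (hD : D ≠ 0)
    (hzα : z ^ (α - 1) = k * D / α) : k * z = α * z ^ α / D := by
  rw [Real.rpow_sub_one hz.ne'] at hzα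
  field_simp at hzα ⊢
  linarith

theorem gbmI_eq_zero {z : ℝ} (hz : 0 < z) (hα : α ≠ 0) (hD : D ≠ 0)
    (hzα : z ^ (α - 1) = k * D / α) : gbmI α γ D k z = 0 := by
  rw [gbmI, show α - γ = (α - 1) + (1 - γ) by ring, Real.rpow_add hz, hzα]
  field_simp
  ring

theorem gbmJ_eq {z : ℝ} (hz : 0 < z) (hα : α ≠ 0) (hD : D ≠ 0)
    (hzα : z ^ (α - 1) = k * D / α) : gbmJ α γ D k z = (1 - α) * z ^ α / D := by
  rw [gbmJ, mul_eq_of_rpow_sub_one_eq hz hα hD hzα]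
  ring

theorem gbm_drift_neg {μ σ : ℝ} (hμ : μ < 0) (hα0 : 0 < α) (hα1 : α < 1) :
    α * μ + σ ^ 2 * α * (α - 1) / 2 < 0 := by
  nlinarith [mul_nonneg (mul_nonneg (sq_nonneg σ) hα0.le) (sub_pos.2 hα1).le,
    mul_neg_of_pos_of_neg hα0 hμ]

theorem gbm_critical_lt_root (hα0 : 0 < α) (hα1 : α < 1) (hγ : γ < 0) (hk : 0 < k)
    (hD : 0 < D) :
    (α * (α - γ) / (k * D * (1 - γ))) ^ (1 / (1 - α)) < (α / (k * D)) ^ (1 / (1 - α)) := by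
  have hkD : 0 < k * D := mul_pos hk hD
  refine Real.rpow_lt_rpow (div_pos (mul_pos hα0 (by linarith)) (mul_pos hkD (by linarith))).le
    ?_ (one_div_pos.2 (sub_pos.2 hα1))
  rw [div_lt_div_iff₀ (mul_pos hkD (by linarith)) hkD]
  nlinarith [mul_pos (mul_pos hα0 hkD) (sub_pos.2 hα1)]

theorem exists_gbm_crossing {c : ℝ} (hα0 : 0 < α) (hα1 : α < 1) (hγ : γ < 0) (hk : 0 < k)
    (hD : 0 < D) (hc0 : 0 < c)
    (hc : c < (1 - α) * ((α / (k * D)) ^ (1 / (1 - α))) ^ α / D) :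
    ∃ θ z₂, θ ∈ Ioo 0 ((α * (α - γ) / (k * D * (1 - γ))) ^ (1 / (1 - α))) ∧
      z₂ ∈ Ioo ((α * (α - γ) / (k * D * (1 - γ))) ^ (1 / (1 - α)))
        ((α / (k * D)) ^ (1 / (1 - α))) ∧
      gbmI α γ D k θ = gbmI α γ D k z₂ ∧ gbmJ α γ D k z₂ - gbmJ α γ D k θ = c := by
  set m := (α * (α - γ) / (k * D * (1 - γ))) ^ (1 / (1 - α))
  set z := (α / (k * D)) ^ (1 / (1 - α))
  have hcm : 0 < α * (α - γ) / (k * D * (1 - γ)) :=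
    div_pos (mul_pos hα0 (by linarith)) (mul_pos (mul_pos hk hD) (by linarith))
  have hcz : 0 < α / (k * D) := div_pos hα0 (mul_pos hk hD)
  have hm : m ^ (α - 1) = k * D * (1 - γ) / (α * (α - γ)) := by
    rw [rpow_one_div_one_sub_rpow_sub_one hcm.le hα1.ne, inv_div]
  have hzα : z ^ (α - 1) = k * D / α := by
    rw [rpow_one_div_one_sub_rpow_sub_one hcz.le hα1.ne, inv_div]
  have hm0 : 0 < m := Real.rpow_pos_of_pos hcm _
  have hz0 : 0 < z := Real.rpow_pos_of_pos hcz _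
  refine exists_eq_and_sub_eq_of_strictAntiOn_of_strictMonoOn hm0
    (gbm_critical_lt_root hα0 hα1 hγ hk hD)
    (continuous_gbmI (by linarith) (by linarith)).continuousOn
    (continuous_gbmJ hα0.le).continuousOn (strictAntiOn_gbmI hα0 hα1 hγ hD hm)
    ((strictMonoOn_gbmI hm0 hα0 hα1 hγ hD hm).mono Icc_subset_Ici_self) ?_ hc0 ?_
  · rw [gbmI_zero (by linarith) (by linarith), gbmI_eq_zero hz0 hα0.ne' hD.ne' hzα]
  · rwa [gbmJ_eq hz0 hα0.ne' hD.ne' hzα, gbmJ_zero hα0.ne', sub_zero]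

end GBM

/-- Proposition 7 of the paper, fully explicit for the GBM example. -/
theorem stmt1
    (μ σ r α k γm δα D zstar xhat : ℝ) (I J : ℝ → ℝ)
    (hμ : μ < 0) (hσ : 0 < σ) (hr : 0 < r) (hα : α ∈ Set.Ioo (0:ℝ) 1) (hk : 0 < k)
    (hγm : γm = 1/2 - μ/σ^2 - Real.sqrt ((1/2 - μ/σ^2)^2 + 2*r/σ^2))
    (hδ : δα = α*μ + σ^2*α*(α-1)/2)
    (hD : D = r - δα)
    (hI : ∀ x, 0 < x → I x = (1/γm) * (α * x ^ (α - γm) / D - k * x ^ (1 - γm)))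
    (hJ : ∀ x, 0 < x → J x = (1 - α/γm) * x ^ α / D - k * x * (1 - 1/γm))
    (hz : zstar = (α/(k*D)) ^ (1/(1-α)))
    (hx : xhat = (α*(α-γm)/(k*D*(1-γm))) ^ (1/(1-α))) :
    ∀ c₂, 0 < c₂ → c₂ < (1-α) * zstar ^ α / D →
      ∃ θ z₂, θ ∈ Set.Ioo 0 xhat ∧ z₂ ∈ Set.Ioo xhat zstar ∧
        I θ = I z₂ ∧ J z₂ - J θ = c₂ := by
  intro c₂ hc0 hc1
  obtain ⟨hα0, hα1⟩ := hα
  have hγ : γm < 0 := hγm ▸ sub_sqrt_sq_add_neg _ (by positivity)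
  have hDpos : 0 < D := by linarith [gbm_drift_neg (σ := σ) hμ hα0 hα1]
  subst hx hz
  obtain ⟨θ, z₂, hθ, hz₂, hIθ, hJθ⟩ := exists_gbm_crossing hα0 hα1 hγ hk hDpos hc0 hc1
  have hz₂pos : 0 < z₂ := hθ.1.trans (hθ.2.trans hz₂.1)
  refine ⟨θ, z₂, hθ, hz₂, ?_, ?_⟩
  · rw [hI θ hθ.1, hI z₂ hz₂pos]
    exact hIθ
  · rw [hJ θ hθ.1, hJ z₂ hz₂pos]
    exact hJθ
end

section
/- Let a < b, r, k ∈ ℝ, and let μ, π : (a,b) → ℝ be differentiable, σ : (a,b) → ℝ with σ(x) > 0. Let φ, F : (a,b) → ℝ be twice differentiable and satisfy (σ(x)²/2)φ″(x) + μ(x)φ′(x) − rφ(x) = 0 and (σ(x)²/2)F″(x) + μ(x)F′(x) − rF(x) + π(x) = 0 for all x ∈ (a,b), with φ′(x) ≠ 0 for all x. Let S : (a,b) → ℝ be differentiable with S(x) > 0 and S′(x) = −(2μ(x)/σ(x)²)·S(x). Define ρ(x) := π(x) + k(μ(x) − r x), I(x) := (F′(x) − k)/φ′(x), and L(x) :=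 σ(x)²·φ′(x)²·I′(x)/(2·S(x)). Then L is differentiable on (a,b) and L′(x) = −ρ′(x)·φ′(x)/S(x) for all x ∈ (a,b). -/
/-!
Put `G y = F y - k y`, so that `σ²/2 G'' + μ G' - r G + ρ = 0`. Since `I' = (G'' φ' - G' φ'') / φ'²`,
`L S = σ²/2 (G'' φ' - G' φ'')`, and eliminating the second derivatives with the two equations gives
`L S = N := r (G φ' - G' φ) - ρ φ'`, which involves first derivatives only and can therefore be
differentiated once more. As `S'/S = -2μ/σ²`, `L' = (N' + (2μ/σ²) N) / S`, and substituting the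
equations again collapses the numerator to `-ρ' φ'`.
-/

open Set

section Wronskian

variable {s m r ρ ρ' f f' f'' g g' g'' : ℝ}

theorem half_mul_wronskian_eq (hf : s / 2 * f'' + m * f' - r * f = 0)
    (hg : s / 2 * g'' + m * g' - r * g + ρ = 0) :
    s / 2 * (g'' * f' - g' * f'') = r * (g * f' - g' * f) - ρ * f' := by
  linear_combination f' * hg - g' * hf

theorem wronskian_deriv_add_eq (hs : s ≠ 0) (hf : s / 2 * f'' + m * f' - r * f = 0)
    (hg : s / 2 * g'' + m * g' - r * g + ρ = 0) :
    r * (g * f'' - g'' * f) - ρ' * f' - ρ * f''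
        + 2 * m / s * (r * (g * f' - g' * f) - ρ * f') = -ρ' * f' := by
  field_simp
  linear_combination (2 * (r * g - ρ)) * hf - 2 * r * f * hg

end Wronskian

theorem hasDerivAt_wronskian_sub {G G' ρ φ φ' : ℝ → ℝ} {g'' ρ' f'' r x : ℝ}
    (hG : HasDerivAt G (G' x) x) (hG' : HasDerivAt G' g'' x) (hρ : HasDerivAt ρ ρ' x)
    (hφ : HasDerivAt φ (φ' x) x) (hφ' : HasDerivAt φ' f'' x) :
    HasDerivAt (fun y => r * (G y * φ' y - G' y * φ y) - ρ y * φ' y)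
      (r * (G x * f'' - g'' * φ x) - ρ' * φ' x - ρ x * f'') x := by
  exact ((((hG.mul hφ').sub (hG'.mul hφ)).const_mul r).sub (hρ.mul hφ')).congr_deriv (by ring)

theorem HasDerivAt.div_of_hasDerivAt_neg_mul_self {N S : ℝ → ℝ} {N' c x : ℝ}
    (hN : HasDerivAt N N' x) (hS : HasDerivAt S (-c * S x) x) (hSx : S x ≠ 0) :
    HasDerivAt (fun y => N y / S y) ((N' + c * N x) / S x) x := by
  exact (hN.div hS hSx).congr_deriv (by field_simp; ring)

theorem stmt5_general (a b r k : ℝ)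
    (μ μ' π π' σ φ φ' φ'' F F' F'' S I' : ℝ → ℝ)
    (hμ : ∀ x ∈ Set.Ioo a b, HasDerivAt μ (μ' x) x)
    (hπ : ∀ x ∈ Set.Ioo a b, HasDerivAt π (π' x) x)
    (hσ : ∀ x ∈ Set.Ioo a b, 0 < σ x)
    (hφ : ∀ x ∈ Set.Ioo a b, HasDerivAt φ (φ' x) x)
    (hφ2 : ∀ x ∈ Set.Ioo a b, HasDerivAt φ' (φ'' x) x)
    (hF : ∀ x ∈ Set.Ioo a b, HasDerivAt F (F' x) x)
    (hF2 : ∀ x ∈ Set.Ioo a b, HasDerivAt F' (F'' x) x)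
    (hODEφ : ∀ x ∈ Set.Ioo a b, σ x ^ 2 / 2 * φ'' x + μ x * φ' x - r * φ x = 0)
    (hODEF : ∀ x ∈ Set.Ioo a b,
      σ x ^ 2 / 2 * F'' x + μ x * F' x - r * F x + π x = 0)
    (hφ'ne : ∀ x ∈ Set.Ioo a b, φ' x ≠ 0)
    (hSpos : ∀ x ∈ Set.Ioo a b, 0 < S x)
    (hS' : ∀ x ∈ Set.Ioo a b, HasDerivAt S (-(2 * μ x / σ x ^ 2) * S x) x)
    (hI' : ∀ x ∈ Set.Ioo a b, HasDerivAt (fun y => (F' y - k) / φ' y) (I' x) x)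
    (L : ℝ → ℝ)
    (hL : ∀ x, L x = σ x ^ 2 * (φ' x) ^ 2 * I' x / (2 * S x)) :
    ∀ x ∈ Set.Ioo a b,
      HasDerivAt L (-(π' x + k * (μ' x - r)) * φ' x / S x) x := by
  set G : ℝ → ℝ := fun y => F y - k * y
  set ρ : ℝ → ℝ := fun y => π y + k * (μ y - r * y)
  have hODEG (y) (hy : y ∈ Ioo a b) :
      σ y ^ 2 / 2 * F'' y + μ y * (F' y - k) - r * G y + ρ y = 0 := by
    linear_combination hODEF y hy
  have hLN : ∀ y ∈ Ioo a b, L y = (r * (G y * φ' y - (F' y - k) * φ y) - ρ y * φ' y) / S y := by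
    intro y hy
    have hI'y := (hI' y hy).unique (((hF2 y hy).sub_const k).div (hφ2 y hy) (hφ'ne y hy))
    rw [← half_mul_wronskian_eq (hODEφ y hy) (hODEG y hy), hL, hI'y]
    field_simp [hφ'ne y hy]
  intro x hx
  have hG : HasDerivAt G (F' x - k) x :=
    ((hF x hx).sub ((hasDerivAt_id' x).const_mul k)).congr_deriv (by ring)
  have hρ : HasDerivAt ρ (π' x + k * (μ' x - r)) x :=
    ((hπ x hx).add (((hμ x hx).sub ((hasDerivAt_id' x).const_mul r)).const_mul k)).congr_deriv
      (by ring)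
  have hN := hasDerivAt_wronskian_sub (r := r) hG ((hF2 x hx).sub_const k) hρ (hφ x hx) (hφ2 x hx)
  have hLx := (hN.div_of_hasDerivAt_neg_mul_self (hS' x hx) (hSpos x hx).ne').congr_of_eventuallyEq
    (Filter.eventuallyEq_of_mem (isOpen_Ioo.mem_nhds hx) hLN)
  rwa [wronskian_deriv_add_eq (pow_ne_zero 2 (hσ x hx).ne') (hODEφ x hx) (hODEG x hx)] at hLx

/-- Key differential identity in the proof of Lemma 4: `L′ = −ρ′ φ′ / S`. -/
theorem stmt5 (a b r k : ℝ) (hab : a < b)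
    (μ μ' π π' σ φ φ' φ'' F F' F'' S I' : ℝ → ℝ)
    (hμ : ∀ x ∈ Set.Ioo a b, HasDerivAt μ (μ' x) x)
    (hπ : ∀ x ∈ Set.Ioo a b, HasDerivAt π (π' x) x)
    (hσ : ∀ x ∈ Set.Ioo a b, 0 < σ x)
    (hφ : ∀ x ∈ Set.Ioo a b, HasDerivAt φ (φ' x) x)
    (hφ2 : ∀ x ∈ Set.Ioo a b, HasDerivAt φ' (φ'' x) x)
    (hF : ∀ x ∈ Set.Ioo a b, HasDerivAt F (F' x) x)
    (hF2 : ∀ x ∈ Set.Ioo a b, HasDerivAt F' (F'' x) x)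
    (hODEφ : ∀ x ∈ Set.Ioo a b, σ x ^ 2 / 2 * φ'' x + μ x * φ' x - r * φ x = 0)
    (hODEF : ∀ x ∈ Set.Ioo a b,
      σ x ^ 2 / 2 * F'' x + μ x * F' x - r * F x + π x = 0)
    (hφ'ne : ∀ x ∈ Set.Ioo a b, φ' x ≠ 0)
    (hSpos : ∀ x ∈ Set.Ioo a b, 0 < S x)
    (hS' : ∀ x ∈ Set.Ioo a b, HasDerivAt S (-(2 * μ x / σ x ^ 2) * S x) x)
    (hI' : ∀ x ∈ Set.Ioo a b, HasDerivAt (fun y => (F' y - k) / φ' y) (I' x) x)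
    (L : ℝ → ℝ)
    (hL : ∀ x, L x = σ x ^ 2 * (φ' x) ^ 2 * I' x / (2 * S x)) :
    ∀ x ∈ Set.Ioo a b,
      HasDerivAt L (-(π' x + k * (μ' x - r)) * φ' x / S x) x :=
  stmt5_general a b r k μ μ' π π' σ φ φ' φ'' F F' F'' S I' hμ hπ hσ hφ hφ2 hF hF2 hODEφ hODEF hφ'ne
    hSpos hS' hI' L hL
end

section
/- Let a < x̂ < z* be reals, and let I, J : (a,z*] → ℝ be continuous with I strictly decreasing on (a,x̂] and strictly increasing on [x̂,z*], and J strictly increasing on (a,x̂] and strictly decreasing on [x̂,z*]. Suppose I(x) → I(z*) and J(x) → J₀ as x → a from the right, and that J₀ < J(z*). Then for every c ∈ (0, J(z*) − J₀) there exist θ ∈ (a,x̂) and z ∈ (x̂,z*) such that I(θ) = I(z) and J(z) − J(θ) = c. -/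
open Set Filter Topology

/-- The intermediate-value argument proving Proposition 7. -/
theorem stmt6 (a xhat zstar J₀ : ℝ) (hax : a < xhat) (hxz : xhat < zstar)
    (I J : ℝ → ℝ)
    (hIcont : ContinuousOn I (Set.Ioc a zstar))
    (hJcont : ContinuousOn J (Set.Ioc a zstar))
    (hIanti : ∀ x ∈ Set.Ioc a xhat, ∀ y ∈ Set.Ioc a xhat, x < y → I y < I x)
    (hImono : ∀ x ∈ Set.Icc xhat zstar, ∀ y ∈ Set.Icc xhat zstar, x < y → I x < I y)
    (hJmono : ∀ x ∈ Set.Ioc a xhat, ∀ y ∈ Set.Ioc a xhat, x < y → J x < J y)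
    (hJanti : ∀ x ∈ Set.Icc xhat zstar, ∀ y ∈ Set.Icc xhat zstar, x < y → J y < J x)
    (hIlim : Tendsto I (𝓝[>] a) (𝓝 (I zstar)))
    (hJlim : Tendsto J (𝓝[>] a) (𝓝 J₀))
    (hJ0 : J₀ < J zstar) :
    ∀ c, 0 < c → c < J zstar - J₀ →
      ∃ θ ∈ Set.Ioo a xhat, ∃ z ∈ Set.Ioo xhat zstar,
        I θ = I z ∧ J z - J θ = c := by
  intro c hc hc'
  have hsub1 : Set.Icc xhat zstar ⊆ Set.Ioc a zstar := fun y hy =>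
    ⟨lt_of_lt_of_le hax hy.1, hy.2⟩
  have hsub2 : Set.Ioo a xhat ⊆ Set.Ioc a zstar := fun y hy =>
    ⟨hy.1, le_of_lt (hy.2.trans hxz)⟩
  -- I x < I zstar on (a, xhat)
  have hIlt : ∀ x ∈ Set.Ioo a xhat, I x < I zstar := by
    intro x hx
    obtain ⟨x', hx'1, hx'2⟩ := exists_between hx.1
    have h1 : I x < I x' := hIanti x' ⟨hx'1, le_of_lt (hx'2.trans hx.2)⟩ x ⟨hx'1.trans hx'2, hx.2.le⟩ hx'2
    have h2 : I x' ≤ I zstar := by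
      refine ge_of_tendsto hIlim ?_
      filter_upwards [Ioo_mem_nhdsGT_of_mem (left_mem_Ico.2 hx'1)] with y hy
      exact le_of_lt (hIanti y ⟨hy.1, le_of_lt ((hy.2.trans hx'2).trans hx.2)⟩ x'
        ⟨hx'1, le_of_lt (hx'2.trans hx.2)⟩ hy.2)
    exact lt_of_lt_of_le h1 h2
  have hIgt : ∀ x ∈ Set.Ioo a xhat, I xhat < I x :=
    fun x hx => hIanti x ⟨hx.1, hx.2.le⟩ xhat ⟨hax, le_refl _⟩ hx.2
  -- define Z via IVT
  have hZex : ∀ x ∈ Set.Ioo a xhat, ∃ z, z ∈ Set.Ioo xhat zstar ∧ I z = I x := by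
    intro x hx
    have h := intermediate_value_Ioo hxz.le (hIcont.mono hsub1)
    obtain ⟨z, hz1, hz2⟩ := h ⟨hIgt x hx, hIlt x hx⟩
    exact ⟨z, hz1, hz2⟩
  choose! Z hZmem hZval using hZex
  -- continuity of Z
  have hZcont : ∀ s ⊆ Set.Ioo a xhat, ∀ x₀ ∈ s, Tendsto Z (𝓝[s] x₀) (𝓝 (Z x₀)) := by
    intro s hs x₀ hx₀
    have hx₀' := hs hx₀
    have hZm := hZmem x₀ hx₀'
    have hIc : Tendsto I (𝓝[s] x₀) (𝓝 (I x₀)) :=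
      ((hIcont x₀ (hsub2 hx₀')).mono_left
        (nhdsWithin_mono _ (hs.trans hsub2)))
    rw [tendsto_order]
    constructor
    · intro l hl
      rcases le_or_gt l xhat with h | h
      · filter_upwards [self_mem_nhdsWithin] with x hx
        exact lt_of_le_of_lt h (hZmem x (hs hx)).1
      · have hlmem : l ∈ Set.Icc xhat zstar := ⟨h.le, le_of_lt (hl.trans hZm.2)⟩
        have hIl : I l < I x₀ := by
          rw [← hZval x₀ hx₀']
          exact hImono l hlmem (Z x₀) ⟨hZm.1.le, hZm.2.le⟩ hl
        filter_upwards [hIc.eventually (eventually_gt_nhds hIl), self_mem_nhdsWithin]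
          with x hIx hxs
        by_contra hle
        push_neg at hle
        have h1 : I (Z x) ≤ I l := by
          rcases eq_or_lt_of_le hle with he | hlt
          · rw [he]
          · exact le_of_lt (hImono (Z x) ⟨(hZmem x (hs hxs)).1.le,
              le_of_lt (hZmem x (hs hxs)).2⟩ l hlmem hlt)
        rw [hZval x (hs hxs)] at h1
        exact absurd hIx (not_lt.2 h1)
    · intro u hu
      rcases le_or_gt zstar u with h | h
      · filter_upwards [self_mem_nhdsWithin] with x hx
        exact lt_of_lt_of_le (hZmem x (hs hx)).2 h
      · have humem : u ∈ Set.Icc xhat zstar := ⟨le_of_lt (hZm.1.trans hu), h.le⟩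
        have hIu : I x₀ < I u := by
          rw [← hZval x₀ hx₀']
          exact hImono (Z x₀) ⟨hZm.1.le, hZm.2.le⟩ u humem hu
        filter_upwards [hIc.eventually (eventually_lt_nhds hIu), self_mem_nhdsWithin]
          with x hIx hxs
        by_contra hle
        push_neg at hle
        have h1 : I u ≤ I (Z x) := by
          rcases eq_or_lt_of_le hle with he | hlt
          · rw [he]
          · exact le_of_lt (hImono u humem (Z x)
              ⟨(hZmem x (hs hxs)).1.le, le_of_lt (hZmem x (hs hxs)).2⟩ hlt)
        rw [hZval x (hs hxs)] at h1
        exact absurd hIx (not_lt.2 h1)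
  -- pick x₁ close to xhat with J xhat - J x₁ < c
  have hJx : Tendsto J (𝓝[Set.Ioo a xhat] xhat) (𝓝 (J xhat)) :=
    ((hJcont xhat ⟨hax, hxz.le⟩).mono_left (nhdsWithin_mono _ hsub2))
  have hne : (𝓝[Set.Ioo a xhat] xhat).NeBot := by
    rw [nhdsWithin_Ioo_eq_nhdsLT hax]
    infer_instance
  obtain ⟨x₁, hx₁mem, hx₁J⟩ :
      ∃ x₁, x₁ ∈ Set.Ioo a xhat ∧ J xhat - c < J x₁ := by
    have h1 : ∀ᶠ x in 𝓝[Set.Ioo a xhat] xhat, J xhat - c < J x :=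
      hJx.eventually (eventually_gt_nhds (by linarith))
    exact (h1.and self_mem_nhdsWithin).exists.imp fun x hx => ⟨hx.2, hx.1⟩
  -- pick x₂ close to a with J x₂ < J zstar - c
  obtain ⟨x₂, hx₂mem, hx₂J⟩ :
      ∃ x₂, x₂ ∈ Set.Ioo a x₁ ∧ J x₂ < J zstar - c := by
    have h1 : ∀ᶠ x in 𝓝[>] a, J x < J zstar - c :=
      hJlim.eventually (eventually_lt_nhds (by linarith))
    have h2 : Set.Ioo a x₁ ∈ 𝓝[>] a :=
      Ioo_mem_nhdsGT_of_mem (left_mem_Ico.2 hx₁mem.1)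
    have : (𝓝[>] a).NeBot := nhdsGT_neBot a
    exact ((h1.and h2).exists).imp fun x hx => ⟨hx.2, hx.1⟩
  have hx₂mem' : x₂ ∈ Set.Ioo a xhat := ⟨hx₂mem.1, hx₂mem.2.trans hx₁mem.2⟩
  have hIccsub : Set.Icc x₂ x₁ ⊆ Set.Ioo a xhat := fun y hy =>
    ⟨hx₂mem.1.trans_le hy.1, lt_of_le_of_lt hy.2 hx₁mem.2⟩
  -- h = J ∘ Z - J is continuous on Icc x₂ x₁
  set h : ℝ → ℝ := fun x => J (Z x) - J x with hh
  have hcont : ContinuousOn h (Set.Icc x₂ x₁) := by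
    intro x₀ hx₀
    have hZt := hZcont _ hIccsub x₀ hx₀
    have hJZ : Tendsto (fun x => J (Z x)) (𝓝[Set.Icc x₂ x₁] x₀) (𝓝 (J (Z x₀))) := by
      refine (hJcont (Z x₀) ?_).tendsto.comp ?_
      · exact hsub1 ⟨(hZmem x₀ (hIccsub hx₀)).1.le, (hZmem x₀ (hIccsub hx₀)).2.le⟩
      · rw [tendsto_nhdsWithin_iff]
        refine ⟨hZt, ?_⟩
        filter_upwards [self_mem_nhdsWithin] with x hx
        exact hsub1 ⟨(hZmem x (hIccsub hx)).1.le, (hZmem x (hIccsub hx)).2.le⟩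
    have hJx' : Tendsto J (𝓝[Set.Icc x₂ x₁] x₀) (𝓝 (J x₀)) :=
      ((hJcont x₀ (hsub2 (hIccsub hx₀))).mono_left
        (nhdsWithin_mono _ (hIccsub.trans hsub2)))
    exact (hJZ.sub hJx')
  -- endpoint estimates
  have hhx₁ : h x₁ < c := by
    have hZ1 := hZmem x₁ hx₁mem
    have : J (Z x₁) < J xhat :=
      hJanti xhat ⟨le_refl _, hxz.le⟩ (Z x₁) ⟨hZ1.1.le, hZ1.2.le⟩ hZ1.1
    simp only [hh]
    linarith
  have hhx₂ : c < h x₂ := by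
    have hZ2 := hZmem x₂ hx₂mem'
    have : J zstar < J (Z x₂) :=
      hJanti (Z x₂) ⟨hZ2.1.le, hZ2.2.le⟩ zstar ⟨hxz.le, le_refl _⟩ hZ2.2
    simp only [hh]
    linarith
  -- IVT
  have hx₂₁ : x₂ ≤ x₁ := hx₂mem.2.le
  have := intermediate_value_Icc' hx₂₁ hcont
  obtain ⟨θ, hθmem, hθval⟩ := this ⟨hhx₁.le, hhx₂.le⟩
  have hθmem' : θ ∈ Set.Ioo a xhat := hIccsub hθmem
  refine ⟨θ, hθmem', Z θ, hZmem θ hθmem', (hZval θ hθmem').symm, ?_⟩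
  simpa [hh] using hθval
end

section
/- Let a < θ* < z₂ < b (with b ≤ ∞), k > 0, c > 0, and let V : (a,b) → ℝ be differentiable with V′(x) = k for x ∈ (a,θ*], V′(x) > k for x ∈ (θ*,z₂), V′(x) < k for x ∈ (z₂,b), and V(θ*) − k·θ* = V(z₂) − k·z₂ − c. Then for every x ∈ (a,b) and every ζ ≥ 0 with x + ζ ∈ (a,b), V(x) ≥ V(x+ζ) − kζ − c. -/
/-- The quasi-variational inequality `V x ≥ V (x+ζ) − kζ − c` in Lemma EC.8. -/
theorem stmt7 (a : ℝ) (b : EReal) (θstar z₂ k c : ℝ)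
    (h1 : a < θstar) (h2 : θstar < z₂) (h3 : (z₂ : EReal) < b)
    (hk : 0 < k) (hc : 0 < c)
    (V V' : ℝ → ℝ)
    (hV : ∀ x, a < x → (x : EReal) < b → HasDerivAt V (V' x) x)
    (hV1 : ∀ x, a < x → x ≤ θstar → V' x = k)
    (hV2 : ∀ x, θstar < x → x < z₂ → k < V' x)
    (hV3 : ∀ x, z₂ < x → (x : EReal) < b → V' x < k)
    (hmatch : V θstar - k * θstar = V z₂ - k * z₂ - c) :
    ∀ x, a < x → (x : EReal) < b → ∀ ζ, 0 ≤ ζ → ((x + ζ : ℝ) : EReal) < b →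
      V (x + ζ) - k * ζ - c ≤ V x := by
  set W : ℝ → ℝ := fun t => V t - k * t with hWdef
  have hW : ∀ t, a < t → (t : EReal) < b → HasDerivAt W (V' t - k) t := by
    intro t ht1 ht2
    have : HasDerivAt (fun t : ℝ => k * t) k t := by
      simpa using (hasDerivAt_id t).const_mul k
    exact (hV t ht1 ht2).sub this
  -- monotonicity lemma
  have mono : ∀ y z : ℝ, a < y → y ≤ z → (z : EReal) < b →
      (∀ t, y < t → t < z → 0 ≤ V' t - k) → W y ≤ W z := by
    intro y z hy hyz hz hd
    have hmem : ∀ t ∈ Set.Icc y z, a < t ∧ (t : EReal) < b := by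
      intro t ht
      exact ⟨lt_of_lt_of_le hy ht.1, lt_of_le_of_lt (EReal.coe_le_coe_iff.2 ht.2) hz⟩
    have hcont : ContinuousOn W (Set.Icc y z) := fun t ht =>
      ((hW t (hmem t ht).1 (hmem t ht).2).continuousAt).continuousWithinAt
    have hdiff : DifferentiableOn ℝ W (interior (Set.Icc y z)) := by
      rw [interior_Icc]
      intro t ht
      exact ((hW t (hmem t ⟨ht.1.le, ht.2.le⟩).1
        (hmem t ⟨ht.1.le, ht.2.le⟩).2).differentiableAt).differentiableWithinAt
    have hderiv : ∀ t ∈ interior (Set.Icc y z), 0 ≤ deriv W t := by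
      rw [interior_Icc]
      intro t ht
      rw [(hW t (hmem t ⟨ht.1.le, ht.2.le⟩).1 (hmem t ⟨ht.1.le, ht.2.le⟩).2).deriv]
      exact hd t ht.1 ht.2
    exact (monotoneOn_of_deriv_nonneg (convex_Icc y z) hcont hdiff hderiv)
      (Set.left_mem_Icc.2 hyz) (Set.right_mem_Icc.2 hyz) hyz
  have anti : ∀ y z : ℝ, a < y → y ≤ z → (z : EReal) < b →
      (∀ t, y < t → t < z → V' t - k ≤ 0) → W z ≤ W y := by
    intro y z hy hyz hz hd
    have hmem : ∀ t ∈ Set.Icc y z, a < t ∧ (t : EReal) < b := by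
      intro t ht
      exact ⟨lt_of_lt_of_le hy ht.1, lt_of_le_of_lt (EReal.coe_le_coe_iff.2 ht.2) hz⟩
    have hcont : ContinuousOn W (Set.Icc y z) := fun t ht =>
      ((hW t (hmem t ht).1 (hmem t ht).2).continuousAt).continuousWithinAt
    have hdiff : DifferentiableOn ℝ W (interior (Set.Icc y z)) := by
      rw [interior_Icc]
      intro t ht
      exact ((hW t (hmem t ⟨ht.1.le, ht.2.le⟩).1
        (hmem t ⟨ht.1.le, ht.2.le⟩).2).differentiableAt).differentiableWithinAt
    have hderiv : ∀ t ∈ interior (Set.Icc y z), deriv W t ≤ 0 := by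
      rw [interior_Icc]
      intro t ht
      rw [(hW t (hmem t ⟨ht.1.le, ht.2.le⟩).1 (hmem t ⟨ht.1.le, ht.2.le⟩).2).deriv]
      exact hd t ht.1 ht.2
    exact (antitoneOn_of_deriv_nonpos (convex_Icc y z) hcont hdiff hderiv)
      (Set.left_mem_Icc.2 hyz) (Set.right_mem_Icc.2 hyz) hyz
  have hθb : (θstar : EReal) < b := lt_trans (EReal.coe_lt_coe_iff.2 h2) h3
  -- W is constant on (a, θstar]
  have const : ∀ y, a < y → y ≤ θstar → W y = W θstar := by
    intro y hy hyθ
    have hle : W y ≤ W θstar := mono y θstar hy hyθ hθb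
      (fun t ht1 ht2 => by rw [hV1 t (lt_trans hy ht1) ht2.le]; simp)
    have hge : W θstar ≤ W y := anti y θstar hy hyθ hθb
      (fun t ht1 ht2 => by rw [hV1 t (lt_trans hy ht1) ht2.le]; simp)
    exact le_antisymm hle hge
  -- W θstar ≤ W x for x ∈ (a, z₂]
  have lower : ∀ x, a < x → x ≤ z₂ → W θstar ≤ W x := by
    intro x hx hxz
    rcases le_or_gt x θstar with h | h
    · exact (const x hx h).ge
    · have : W θstar ≤ W x := mono θstar x h1 h.le
        (lt_of_le_of_lt (EReal.coe_le_coe_iff.2 hxz) h3)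
        (fun t ht1 ht2 => (sub_nonneg.2 (hV2 t ht1 (lt_of_lt_of_le ht2 hxz)).le))
      exact this
  -- W y ≤ W z₂ for y ∈ (a, b)
  have upper : ∀ y, a < y → (y : EReal) < b → W y ≤ W z₂ := by
    intro y hy hyb
    rcases le_or_gt y z₂ with h | h
    · rcases le_or_gt y θstar with h' | h'
      · rw [const y hy h']
        exact mono θstar z₂ h1 h2.le h3
          (fun t ht1 ht2 => (sub_nonneg.2 (hV2 t ht1 ht2).le))
      · exact mono y z₂ (lt_trans h1 h') h h3
          (fun t ht1 ht2 => (sub_nonneg.2 (hV2 t (lt_trans h' ht1) ht2).le))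
    · exact anti z₂ y (lt_trans h1 h2) h.le hyb
        (fun t ht1 ht2 => sub_nonpos.2 (hV3 t ht1
          (lt_trans (EReal.coe_lt_coe_iff.2 ht2) hyb)).le)
  intro x hx hxb ζ hζ hxζb
  have key : W (x + ζ) ≤ W x + c := by
    rcases le_or_gt x z₂ with h | h
    · have h1' : W (x + ζ) ≤ W z₂ := upper (x + ζ) (by linarith) hxζb
      have h2' : W z₂ = W θstar + c := by
        simp only [hWdef]; linarith [hmatch]
      have h3' : W θstar ≤ W x := lower x hx h
      linarith
    · have : W (x + ζ) ≤ W x :=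
        anti x (x + ζ) hx (by linarith) hxζb
          (fun t ht1 ht2 => sub_nonpos.2 (hV3 t (lt_trans h ht1)
            (lt_trans (EReal.coe_lt_coe_iff.2 ht2) hxζb)).le)
      linarith
  simp only [hWdef] at key
  linarith [key]
end

section
/- Fix constants μ < 0, σ > 0, r > 0, α ∈ (0,1), k > 0. Let γ₋ := 1/2 − μ/σ² − √((1/2 − μ/σ²)² + 2r/σ²) (so γ₋ < 0), δ(α) := αμ + σ²α(α−1)/2, and D := r − δ(α) (so D > 0). On (0,∞) define I(x) := (1/γ₋)(α x^{α−γ₋}/D − k x^{1−γ₋}), z* := (α/(kD))^{1/(1−α)}, and x̂ := (α(α−γ₋)/(kD(1−γ₋)))^{1/(1−α)}. Then: (i) 0 < x̂ < z*; (ii) I is strictly decreasing on (0,x̂] and strictly increasing on [x̂,∞); (iii) I(x) < 0 for x ∈ (0,z*), I(z*) = 0, and I(x) > 0 for x > z*; (iv) I(x) → 0 as x → 0 from the right. -/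
/-!
Write `I = γ₋⁻¹ · g` with `g x = A x^p - k x^q`, where `A = α / D`, `p = α - γ₋`, `q = 1 - γ₋`;
here `γ₋ < 0`, `D > 0` and `0 < p < q`. The factorisation `g x = k x^p (z^(q-p) - x^(q-p))`
with `z = (A / k)^(1/(q-p))` shows that `g` is positive before `z` and negative after it.
The derivative `A p x^(p-1) - k q x^(q-1)` of `g` has the same shape with the same gap `q - p`,
so `g` increases up to `x̂ = (A p / (k q))^(1/(q-p))` and decreases afterwards, and `x̂ < z`
because `p < q`. Multiplying by `γ₋⁻¹ < 0` reverses every inequality.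
-/

open Set Filter Topology

theorem sub_sqrt_sq_add_neg_s18 {a b : ℝ} (hb : 0 < b) : a - Real.sqrt (a ^ 2 + b) < 0 := by
  have : Real.sqrt (a ^ 2) < Real.sqrt (a ^ 2 + b) :=
    Real.sqrt_lt_sqrt (sq_nonneg a) (lt_add_of_pos_right _ hb)
  rw [Real.sqrt_sq_eq_abs] at this
  linarith [le_abs_self a]

noncomputable def powDiff (A k p q x : ℝ) : ℝ := A * x ^ p - k * x ^ q

noncomputable def powDiffRoot (A k p q : ℝ) : ℝ := (A / k) ^ (1 / (q - p))

section powDiff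

variable {A k p q x : ℝ}

theorem powDiffRoot_nonneg (hA : 0 ≤ A) (hk : 0 ≤ k) : 0 ≤ powDiffRoot A k p q := by
  unfold powDiffRoot; positivity

theorem powDiffRoot_pos (hA : 0 < A) (hk : 0 < k) : 0 < powDiffRoot A k p q := by
  unfold powDiffRoot; positivity

theorem powDiffRoot_sub_one : powDiffRoot A k (p - 1) (q - 1) = powDiffRoot A k p q := by
  rw [powDiffRoot, sub_sub_sub_cancel_right, powDiffRoot]

theorem powDiffRoot_mul_lt (hA : 0 < A) (hk : 0 < k) (hp : 0 < p) (hpq : p < q) :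
    powDiffRoot (A * p) (k * q) p q < powDiffRoot A k p q := by
  have hq : 0 < q := hp.trans hpq
  refine Real.rpow_lt_rpow (by positivity) ?_ (one_div_pos.2 (sub_pos.2 hpq))
  rw [mul_div_mul_comm]
  exact mul_lt_of_lt_one_right (div_pos hA hk) ((div_lt_one hq).2 hpq)

theorem powDiff_eq_mul_sub (hA : 0 ≤ A) (hk : 0 < k) (hpq : p < q) (hx : 0 < x) :
    powDiff A k p q x = k * x ^ p * (powDiffRoot A k p q ^ (q - p) - x ^ (q - p)) := by
  have hxq : x ^ q = x ^ p * x ^ (q - p) := by rw [← Real.rpow_add hx, add_sub_cancel]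
  rw [powDiffRoot, one_div, Real.rpow_inv_rpow (div_nonneg hA hk.le) (sub_pos.2 hpq).ne', powDiff,
    hxq]
  field_simp

theorem powDiff_pos_iff (hA : 0 ≤ A) (hk : 0 < k) (hpq : p < q) (hx : 0 < x) :
    0 < powDiff A k p q x ↔ x < powDiffRoot A k p q := by
  rw [powDiff_eq_mul_sub hA hk hpq hx, mul_pos_iff_of_pos_left (by positivity), sub_pos,
    Real.rpow_lt_rpow_iff hx.le (powDiffRoot_nonneg hA hk.le) (sub_pos.2 hpq)]

theorem powDiff_neg_iff (hA : 0 ≤ A) (hk : 0 < k) (hpq : p < q) (hx : 0 < x) :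
    powDiff A k p q x < 0 ↔ powDiffRoot A k p q < x := by
  rw [powDiff_eq_mul_sub hA hk hpq hx, ← neg_pos, ← mul_neg,
    mul_pos_iff_of_pos_left (by positivity), neg_pos, sub_neg,
    Real.rpow_lt_rpow_iff (powDiffRoot_nonneg hA hk.le) hx.le (sub_pos.2 hpq)]

theorem powDiff_powDiffRoot (hA : 0 < A) (hk : 0 < k) (hpq : p < q) :
    powDiff A k p q (powDiffRoot A k p q) = 0 := by
  rw [powDiff_eq_mul_sub hA.le hk hpq (powDiffRoot_pos hA hk), sub_self, mul_zero]

theorem hasDerivAt_powDiff (hx : x ≠ 0) :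
    HasDerivAt (powDiff A k p q) (powDiff (A * p) (k * q) (p - 1) (q - 1) x) x := by
  have h := ((Real.hasDerivAt_rpow_const (p := p) (Or.inl hx)).const_mul A).sub
    ((Real.hasDerivAt_rpow_const (p := q) (Or.inl hx)).const_mul k)
  exact h.congr_deriv (by rw [powDiff]; ring)

theorem strictMonoOn_powDiff (hA : 0 ≤ A) (hk : 0 < k) (hp : 0 < p) (hpq : p < q) :
    StrictMonoOn (powDiff A k p q) (Ioc 0 (powDiffRoot (A * p) (k * q) p q)) := by
  refine strictMonoOn_of_deriv_pos (convex_Ioc _ _)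
    (fun x hx => (hasDerivAt_powDiff hx.1.ne').continuousAt.continuousWithinAt) fun x hx => ?_
  rw [interior_Ioc] at hx
  rw [(hasDerivAt_powDiff hx.1.ne').deriv, powDiff_pos_iff (by positivity)
    (mul_pos hk (hp.trans hpq)) (by linarith) hx.1, powDiffRoot_sub_one]
  exact hx.2

theorem strictAntiOn_powDiff (hA : 0 < A) (hk : 0 < k) (hp : 0 < p) (hpq : p < q) :
    StrictAntiOn (powDiff A k p q) (Ici (powDiffRoot (A * p) (k * q) p q)) := by
  have hroot : 0 < powDiffRoot (A * p) (k * q) p q :=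
    powDiffRoot_pos (mul_pos hA hp) (mul_pos hk (hp.trans hpq))
  refine strictAntiOn_of_deriv_neg (convex_Ici _)
    (fun x hx => (hasDerivAt_powDiff (hroot.trans_le hx).ne').continuousAt.continuousWithinAt)
    fun x hx => ?_
  rw [interior_Ici] at hx
  rw [(hasDerivAt_powDiff (hroot.trans hx).ne').deriv, powDiff_neg_iff (by positivity)
    (mul_pos hk (hp.trans hpq)) (by linarith) (hroot.trans hx), powDiffRoot_sub_one]
  exact hx

theorem tendsto_powDiff_zero (hp : 0 < p) (hq : 0 < q) :
    Tendsto (powDiff A k p q) (𝓝 0) (𝓝 0) := by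
  have hxp := (Real.continuousAt_rpow_const 0 p (Or.inr hp.le)).tendsto
  have hxq := (Real.continuousAt_rpow_const 0 q (Or.inr hq.le)).tendsto
  rw [Real.zero_rpow hp.ne'] at hxp
  rw [Real.zero_rpow hq.ne'] at hxq
  show Tendsto (fun x => A * x ^ p - k * x ^ q) (𝓝 0) (𝓝 0)
  simpa using (hxp.const_mul A).sub (hxq.const_mul k)

end powDiff

/-- Shape properties of `I` in the GBM example (Lemma 4 / Proposition 7). -/
theorem stmt18 (μ σ r α k γm δα D zstar xhat : ℝ) (I : ℝ → ℝ)
    (hμ : μ < 0) (hσ : 0 < σ) (hr : 0 < r) (hα : α ∈ Set.Ioo (0:ℝ) 1)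
    (hk : 0 < k)
    (hγm : γm = 1/2 - μ/σ^2 - Real.sqrt ((1/2 - μ/σ^2)^2 + 2*r/σ^2))
    (hδ : δα = α*μ + σ^2*α*(α-1)/2) (hD : D = r - δα)
    (hI : ∀ x, 0 < x → I x = (1/γm) * (α * x ^ (α - γm) / D - k * x ^ (1 - γm)))
    (hz : zstar = (α/(k*D)) ^ (1/(1-α)))
    (hx : xhat = (α*(α-γm)/(k*D*(1-γm))) ^ (1/(1-α))) :
    (0 < xhat ∧ xhat < zstar) ∧
    (∀ x ∈ Set.Ioc 0 xhat, ∀ y ∈ Set.Ioc 0 xhat, x < y → I y < I x) ∧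
    (∀ x ∈ Set.Ici xhat, ∀ y ∈ Set.Ici xhat, x < y → I x < I y) ∧
    (∀ x, 0 < x → x < zstar → I x < 0) ∧
    I zstar = 0 ∧
    (∀ x, zstar < x → 0 < I x) ∧
    Tendsto I (𝓝[>] 0) (𝓝 0) := by
  obtain ⟨hα0, hα1⟩ := hα
  have hγneg : γm < 0 := hγm ▸ sub_sqrt_sq_add_neg_s18 (by positivity)
  have hγ : γm⁻¹ < 0 := inv_lt_zero.2 hγneg
  have hDpos : 0 < D := by
    rw [hD, hδ]
    nlinarith [mul_pos hα0 (neg_pos.2 hμ),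
      mul_pos (mul_pos (pow_pos hσ 2) hα0) (sub_pos.2 hα1)]
  have hA : 0 < α / D := div_pos hα0 hDpos
  have hp : 0 < α - γm := by linarith
  have hpq : α - γm < 1 - γm := by linarith
  have hIg : ∀ x, 0 < x → I x = γm⁻¹ * powDiff (α / D) k (α - γm) (1 - γm) x := by
    intro x hx
    rw [hI x hx, powDiff]; ring
  obtain rfl : zstar = powDiffRoot (α / D) k (α - γm) (1 - γm) := by
    rw [hz, powDiffRoot]; congr 1 <;> ring
  obtain rfl : xhat = powDiffRoot (α / D * (α - γm)) (k * (1 - γm)) (α - γm) (1 - γm) := by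
    rw [hx, powDiffRoot, div_mul_eq_mul_div, div_div]; congr 1 <;> ring
  have hxhat :=
    powDiffRoot_pos (mul_pos hA hp) (mul_pos hk (hp.trans hpq)) (p := α - γm) (q := 1 - γm)
  have hzpos := powDiffRoot_pos hA hk (p := α - γm) (q := 1 - γm)
  refine ⟨⟨hxhat, powDiffRoot_mul_lt hA hk hp hpq⟩, ?_, ?_, ?_, ?_, ?_, ?_⟩
  · intro x hx y hy hxy
    rw [hIg x hx.1, hIg y hy.1, mul_lt_mul_left_of_neg hγ]
    exact strictMonoOn_powDiff hA.le hk hp hpq hx hy hxy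
  · intro x hx y hy hxy
    rw [hIg x (hxhat.trans_le hx), hIg y (hxhat.trans_le hy), mul_lt_mul_left_of_neg hγ]
    exact strictAntiOn_powDiff hA hk hp hpq hx hy hxy
  · intro x hx hxz
    rw [hIg x hx]
    exact mul_neg_of_neg_of_pos hγ ((powDiff_pos_iff hA.le hk hpq hx).2 hxz)
  · rw [hIg _ hzpos, powDiff_powDiffRoot hA hk hpq, mul_zero]
  · intro x hzx
    rw [hIg x (hzpos.trans hzx)]
    exact mul_pos_of_neg_of_neg hγ ((powDiff_neg_iff hA.le hk hpq (hzpos.trans hzx)).2 hzx)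
  · refine Tendsto.congr' (eventually_nhdsWithin_of_forall fun x hx => (hIg x hx).symm) ?_
    simpa using ((tendsto_powDiff_zero hp (hp.trans hpq)).const_mul γm⁻¹).mono_left
      nhdsWithin_le_nhds
end

section
/- Fix constants μ < 0, σ > 0, r > 0, α ∈ (0,1), k > 0. Let γ₋ := 1/2 − μ/σ² − √((1/2 − μ/σ²)² + 2r/σ²) (so γ₋ < 0), δ(α) := αμ + σ²α(α−1)/2, and D := r − δ(α) (so D > 0). On (0,∞) define J(x) := (1 − α/γ₋)·x^α/D − k·x·(1 − 1/γ₋), z* := (α/(kD))^{1/(1−α)}, and x̂ := (α(α−γ₋)/(kD(1−γ₋)))^{1/(1−α)}. Then: (i) J is strictly increasing on (0,x̂] and strictly decreasing on [x̂,∞); (ii) J(x) → 0 as x → 0 from the right; (iii) J(z*) = (1−α)·(z*)^α/D > 0. -/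
open Set Filter Topology

set_option maxHeartbeats 1000000 in
/-- Shape properties of `J` in the GBM example (Lemma 4 / Proposition 7). -/
theorem stmt19 (μ σ r α k γm δα D zstar xhat : ℝ) (J : ℝ → ℝ)
    (hμ : μ < 0) (hσ : 0 < σ) (hr : 0 < r) (hα : α ∈ Set.Ioo (0:ℝ) 1)
    (hk : 0 < k)
    (hγm : γm = 1/2 - μ/σ^2 - Real.sqrt ((1/2 - μ/σ^2)^2 + 2*r/σ^2))
    (hδ : δα = α*μ + σ^2*α*(α-1)/2) (hD : D = r - δα)
    (hJ : ∀ x, 0 < x → J x = (1 - α/γm) * x ^ α / D - k * x * (1 - 1/γm))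
    (hz : zstar = (α/(k*D)) ^ (1/(1-α)))
    (hx : xhat = (α*(α-γm)/(k*D*(1-γm))) ^ (1/(1-α))) :
    (∀ x ∈ Set.Ioc 0 xhat, ∀ y ∈ Set.Ioc 0 xhat, x < y → J x < J y) ∧
    (∀ x ∈ Set.Ici xhat, ∀ y ∈ Set.Ici xhat, x < y → J y < J x) ∧
    Tendsto J (𝓝[>] 0) (𝓝 0) ∧
    J zstar = (1 - α) * zstar ^ α / D ∧
    0 < J zstar := by
  obtain ⟨hα0, hα1⟩ := hα
  have hσ2 : (0:ℝ) < σ^2 := by positivity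
  have hb : 0 < 1/2 - μ/σ^2 := by
    have : μ/σ^2 < 0 := div_neg_of_neg_of_pos hμ hσ2
    linarith
  have hγ : γm < 0 := by
    have h2 : (1/2 - μ/σ^2)^2 < (1/2 - μ/σ^2)^2 + 2*r/σ^2 := by
      have : 0 < 2*r/σ^2 := by positivity
      linarith
    have h1 : (1/2 - μ/σ^2) < Real.sqrt ((1/2 - μ/σ^2)^2 + 2*r/σ^2) := by
      calc (1/2 - μ/σ^2) = Real.sqrt ((1/2 - μ/σ^2)^2) := (Real.sqrt_sq hb.le).symm
        _ < _ := Real.sqrt_lt_sqrt (by positivity) h2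
    rw [hγm]; linarith
  have hDpos : 0 < D := by
    rw [hD, hδ]
    nlinarith [mul_neg_of_pos_of_neg hα0 hμ,
      mul_neg_of_pos_of_neg (mul_pos hσ2 hα0) (sub_neg.mpr hα1)]
  have h1α : 0 < 1 - α := sub_pos.mpr hα1
  have hAg : 0 < 1 - α/γm := by
    have := div_neg_of_pos_of_neg hα0 hγ; linarith
  have hBg : 0 < 1 - 1/γm := by
    have := one_div_neg.mpr hγ; linarith
  set A : ℝ := (1 - α/γm)/D with hA_def
  set B : ℝ := k*(1 - 1/γm) with hB_def
  have hA : 0 < A := div_pos hAg hDpos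
  have hB : 0 < B := mul_pos hk hBg
  set c : ℝ := α*(α-γm)/(k*D*(1-γm)) with hc_def
  have hcpos : 0 < c := by
    apply div_pos (mul_pos hα0 (by linarith))
    exact mul_pos (mul_pos hk hDpos) (by linarith)
  have hxhat_pos : 0 < xhat := by rw [hx]; exact Real.rpow_pos_of_pos hcpos _
  have hxhat_pow : xhat ^ (1-α) = c := by
    rw [hx, ← Real.rpow_mul hcpos.le, one_div, inv_mul_cancel₀ h1α.ne', Real.rpow_one]
  have hγne : γm ≠ 0 := hγ.ne
  have h1γne : (1:ℝ) - γm ≠ 0 := by linarith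
  have hcB : c * B = A * α := by
    rw [hc_def, hB_def, hA_def]
    field_simp
    ring
  set f : ℝ → ℝ := fun x => A * x^α - B*x with hf_def
  have hJf : ∀ x, 0 < x → J x = f x := by
    intro x hx0
    rw [hJ x hx0, hf_def, hA_def, hB_def]
    ring
  have hderiv : ∀ x : ℝ, 0 < x → HasDerivAt f (A*(α*x^(α-1)) - B*1) x := by
    intro x hx0
    exact ((Real.hasDerivAt_rpow_const (Or.inl hx0.ne')).const_mul A).sub
      ((hasDerivAt_id x).const_mul B)
  have hrpinv : ∀ x : ℝ, 0 < x → x^(α-1) = (x^(1-α))⁻¹ := by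
    intro x hx0
    rw [← Real.rpow_neg hx0.le, neg_sub]
  -- strict mono on Ioc 0 xhat
  have hmono : StrictMonoOn f (Set.Ioc 0 xhat) := by
    apply strictMonoOn_of_deriv_pos (convex_Ioc 0 xhat)
    · intro x hx0
      exact ((hderiv x hx0.1).continuousAt).continuousWithinAt
    · intro x hx0
      rw [interior_Ioc] at hx0
      rw [(hderiv x hx0.1).deriv]
      have hupos : 0 < x^(1-α) := Real.rpow_pos_of_pos hx0.1 _
      have hu : x^(1-α) < c := by
        rw [← hxhat_pow]
        exact Real.rpow_lt_rpow hx0.1.le hx0.2 h1α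
      have h1 : B * (x^(1-α)) < A * α := by
        calc B * (x^(1-α)) < B * c := by nlinarith
          _ = A * α := by linarith [hcB]
      have h2 : B < A * α * (x^(1-α))⁻¹ := by
        rw [← div_eq_mul_inv]
        exact (lt_div_iff₀ hupos).mpr h1
      rw [hrpinv x hx0.1]
      nlinarith
  have hanti : StrictAntiOn f (Set.Ici xhat) := by
    apply strictAntiOn_of_deriv_neg (convex_Ici xhat)
    · intro x hx0
      exact ((hderiv x (lt_of_lt_of_le hxhat_pos hx0)).continuousAt).continuousWithinAt
    · intro x hx0
      rw [interior_Ici] at hx0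
      have hxp : 0 < x := lt_trans hxhat_pos hx0
      rw [(hderiv x hxp).deriv]
      have hupos : 0 < x^(1-α) := Real.rpow_pos_of_pos hxp _
      have hu : c < x^(1-α) := by
        rw [← hxhat_pow]
        exact Real.rpow_lt_rpow hxhat_pos.le hx0 h1α
      have h1 : A * α < B * (x^(1-α)) := by
        calc A * α = B * c := by linarith [hcB]
          _ < B * (x^(1-α)) := by nlinarith
      have h2 : A * α * (x^(1-α))⁻¹ < B := by
        rw [← div_eq_mul_inv]
        exact (div_lt_iff₀ hupos).mpr h1
      rw [hrpinv x hxp]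
      nlinarith
  have htend : Tendsto J (𝓝[>] (0:ℝ)) (𝓝 0) := by
    have hcont : ContinuousAt f 0 := by
      apply ContinuousAt.sub
      · exact (Real.continuousAt_rpow_const 0 α (Or.inr hα0.le)).const_mul A
      · exact (continuous_id.continuousAt).const_mul B
    have hf0 : f 0 = 0 := by
      simp [hf_def, Real.zero_rpow hα0.ne']
    have h1 : Tendsto f (𝓝[>] (0:ℝ)) (𝓝 0) := by
      have := hcont.tendsto
      rw [hf0] at this
      exact this.mono_left nhdsWithin_le_nhds
    apply h1.congr'
    filter_upwards [eventually_mem_nhdsWithin] with x hx0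
    exact (hJf x hx0).symm
  have hzb : 0 < α/(k*D) := div_pos hα0 (mul_pos hk hDpos)
  have hzpos : 0 < zstar := by rw [hz]; exact Real.rpow_pos_of_pos hzb _
  have hz_pow : zstar ^ (1-α) = α/(k*D) := by
    rw [hz, ← Real.rpow_mul hzb.le, one_div, inv_mul_cancel₀ h1α.ne', Real.rpow_one]
  have hzsplit : zstar = zstar ^ α * (α/(k*D)) := by
    rw [← hz_pow, ← Real.rpow_add hzpos, add_sub_cancel, Real.rpow_one]
  have hJz : J zstar = (1 - α) * zstar ^ α / D := by
    rw [hJf zstar hzpos, hf_def]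
    simp only
    rw [hA_def, hB_def]
    nth_rewrite 2 [hzsplit]
    field_simp
    ring
  refine ⟨?_, ?_, htend, hJz, ?_⟩
  · intro x hxm y hym hxy
    rw [hJf x hxm.1, hJf y hym.1]
    exact hmono hxm hym hxy
  · intro x hxm y hym hxy
    rw [hJf x (lt_of_lt_of_le hxhat_pos hxm), hJf y (lt_of_lt_of_le hxhat_pos hym)]
    exact hanti hxm hym hxy
  · rw [hJz]
    exact div_pos (mul_pos h1α (Real.rpow_pos_of_pos hzpos _)) hDpos
end
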